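/- arXiv:2503.00008 — 3 statements merged into one kernel-verified Lean document; each statement's English description precedes it below -/
import Mathlib

section
/- Let G be a zero-one network with reactant matrix A ∈ {0,1}^{s×m}, product matrix B ∈ {0,1}^{s×m}, stoichiometric matrix N = B − A of rank d ≥ 2, in which every nonzero row of N changes sign. Suppose exactly m−1 columns of A are zero (say the first m−1 columns). Then the steady-state ideal ⟨f₁,…,f_s⟩ in ℚ(κ)[x], where fᵢ = Σⱼ N_{ij}κⱼ∏ₖ x_k^{A_{kj}}, equals the unit ideal ⟨1⟩. -/
/-!
A negative entry of `N = B - A` is a `-1` at a place where `A` is `1`, and only one column `j₀` of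
`A` is nonzero; so every nonzero row of `N`, changing sign, has `-1` at `j₀`. Rank at least two gives
two distinct nonzero rows `i₁, i₂`. They agree at `j₀` and all other monomials are `1`, so
`f i₁ - f i₂` is the constant `∑ⱼ (N i₁ j - N i₂ j) κⱼ`, nonzero because the `κⱼ` are linearly
independent over `ℚ`.
-/

/-- The field ℚ(κ₁,…,κₘ) of rational functions in the rate constants. -/
abbrev Kf (m : ℕ) : Type := FractionRing (MvPolynomial (Fin m) ℚ)

/-- The rate constant κⱼ as an element of ℚ(κ). -/
noncomputable def kappa (m : ℕ) (j : Fin m) : Kf m :=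
  algebraMap (MvPolynomial (Fin m) ℚ) (Kf m) (MvPolynomial.X j)

theorem Matrix.rank_le_one_of_forall_row_eq_zero_or_eq {ι n K : Type*} [Fintype ι] [Fintype n]
    [Field K] (M : Matrix ι n K) (v : n → K) (h : ∀ i, M i = 0 ∨ M i = v) : M.rank ≤ 1 := by
  rw [M.rank_eq_finrank_span_row]
  calc Module.finrank K (Submodule.span K (Set.range M))
      ≤ Module.finrank K (K ∙ v) := Submodule.finrank_mono (Submodule.span_le.mpr ?_)
    _ ≤ 1 := (finrank_span_le_card {v}).trans (by simp)
  rintro _ ⟨i, rfl⟩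
  rcases h i with h | h <;> simp [h, Submodule.mem_span_singleton_self]

theorem Matrix.exists_rows_ne_of_two_le_rank {ι n K : Type*} [Fintype ι] [Fintype n] [Field K]
    {M : Matrix ι n K} (hM : 2 ≤ M.rank) : ∃ i₁ i₂, M i₁ ≠ 0 ∧ M i₂ ≠ 0 ∧ M i₁ ≠ M i₂ := by
  by_contra! h
  obtain ⟨i₀, hi₀⟩ : ∃ i, M i ≠ 0 := by
    by_contra! h0
    have : M = 0 := funext h0
    simp [this] at hM
  have := M.rank_le_one_of_forall_row_eq_zero_or_eq (M i₀) fun i =>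
    (eq_or_ne (M i) 0).imp_right fun hi => h i i₀ hi hi₀
  omega

theorem eq_one_and_eq_zero_of_natCast_sub_natCast_neg {a b : ℕ} (ha : a = 0 ∨ a = 1)
    (h : (b : ℚ) - a < 0) : a = 1 ∧ b = 0 := by
  have : b < a := by exact_mod_cast sub_neg.mp h
  omega

theorem Fintype.exists_forall_ne_of_card_filter_eq_card_sub_one {α : Type*} [Fintype α]
    (p : α → Prop) [DecidablePred p] (hα : 0 < Fintype.card α)
    (hp : (Finset.univ.filter p).card = Fintype.card α - 1) : ∃ a₀, ∀ a ≠ a₀, p a := by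
  have hcard : (Finset.univ.filter fun a => ¬ p a).card = 1 := by
    have := Finset.card_filter_add_card_filter_not (s := Finset.univ) p
    rw [hp, Finset.card_univ] at this
    omega
  obtain ⟨a₀, ha₀⟩ := Finset.card_eq_one.mp hcard
  refine ⟨a₀, fun a ha => by_contra fun hpa => ha ?_⟩
  have : a ∈ Finset.univ.filter fun a => ¬ p a := Finset.mem_filter.mpr ⟨Finset.mem_univ a, hpa⟩
  simpa [ha₀] using this

theorem sum_ratCast_mul_kappa_ne_zero {m : ℕ} {d : Fin m → ℚ} (hd : d ≠ 0) :
    ∑ j, (d j : Kf m) * kappa m j ≠ 0 := by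
  have hpoly : ∑ j, d j • (MvPolynomial.X j : MvPolynomial (Fin m) ℚ) ≠ 0 := fun h =>
    hd (funext (Fintype.linearIndependent_iff.mp
      (MvPolynomial.linearIndependent_X (Fin m) ℚ) d h))
  have hcast (q : ℚ) : algebraMap (MvPolynomial (Fin m) ℚ) (Kf m) (MvPolynomial.C q) = q :=
    eq_ratCast ((algebraMap _ (Kf m)).comp (MvPolynomial.C : ℚ →+* MvPolynomial (Fin m) ℚ)) q
  have hmap : algebraMap (MvPolynomial (Fin m) ℚ) (Kf m) (∑ j, d j • MvPolynomial.X j) =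
      ∑ j, (d j : Kf m) * kappa m j := by
    simp only [map_sum, MvPolynomial.smul_eq_C_mul, map_mul, hcast, kappa]
  rw [← hmap]
  exact (map_ne_zero_iff _ (IsFractionRing.injective _ _)).mpr hpoly

section ZeroOneNetwork

variable {s m : ℕ} {A : Matrix (Fin s) (Fin m) ℕ} {B : Matrix (Fin s) (Fin m) ℕ}
  {N : Matrix (Fin s) (Fin m) ℚ} {j₀ : Fin m}

theorem row_apply_eq_neg_one (hA01 : ∀ i j, A i j = 0 ∨ A i j = 1)
    (hN : ∀ i j, N i j = (B i j : ℚ) - (A i j : ℚ)) (hcol : ∀ j ≠ j₀, ∀ k, A k j = 0)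
    {i : Fin s} (hi : ∃ j, N i j < 0) : N i j₀ = -1 := by
  obtain ⟨j, hj⟩ := hi
  rw [hN] at hj
  obtain ⟨hA, hB⟩ := eq_one_and_eq_zero_of_natCast_sub_natCast_neg (hA01 i j) hj
  obtain rfl : j = j₀ := by_contra fun hne => by simp [hcol j hne i] at hA
  simp [hN, hA, hB]

theorem sub_eq_C_of_apply_eq {f : Fin s → MvPolynomial (Fin s) (Kf m)}
    (hf : ∀ i, f i = ∑ j, MvPolynomial.C ((N i j : Kf m) * kappa m j) *
        ∏ k, (MvPolynomial.X k) ^ A k j)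
    (hcol : ∀ j ≠ j₀, ∀ k, A k j = 0) {i₁ i₂ : Fin s} (h : N i₁ j₀ = N i₂ j₀) :
    f i₁ - f i₂ = MvPolynomial.C (∑ j, ((N i₁ - N i₂) j : Kf m) * kappa m j) := by
  rw [hf i₁, hf i₂, ← Finset.sum_sub_distrib, map_sum]
  refine Finset.sum_congr rfl fun j _ => ?_
  by_cases hj : j = j₀
  · subst hj
    simp [h]
  · have hmon : (∏ k, (MvPolynomial.X k : MvPolynomial (Fin s) (Kf m)) ^ A k j) = 1 :=
      Finset.prod_eq_one fun k _ => by rw [hcol j hj k, pow_zero]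
    rw [hmon, mul_one, mul_one, ← map_sub, Pi.sub_apply, Rat.cast_sub, sub_mul]

end ZeroOneNetwork

theorem stmt8_general (s m : ℕ) (A B : Matrix (Fin s) (Fin m) ℕ)
    (hA01 : ∀ i j, A i j = 0 ∨ A i j = 1)
    (N : Matrix (Fin s) (Fin m) ℚ)
    (hN : ∀ i j, N i j = (B i j : ℚ) - (A i j : ℚ))
    (hrank : 2 ≤ N.rank)
    (hsign : ∀ i, (N i ≠ 0) → (∃ j, 0 < N i j) ∧ (∃ j, N i j < 0))
    (hzerocols : (Finset.univ.filter (fun j : Fin m => ∀ k, A k j = 0)).card = m - 1)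
    (f : Fin s → MvPolynomial (Fin s) (Kf m))
    (hf : ∀ i, f i = ∑ j, MvPolynomial.C ((N i j : Kf m) * kappa m j) *
        ∏ k, (MvPolynomial.X k) ^ A k j) :
    Ideal.span (Set.range f) = ⊤ := by
  have hm : 0 < Fintype.card (Fin m) := by
    have := hrank.trans N.rank_le_card_width
    omega
  obtain ⟨j₀, hcol⟩ := Fintype.exists_forall_ne_of_card_filter_eq_card_sub_one _ hm
    (by rwa [Fintype.card_fin])
  have hrow (i) (hi : N i ≠ 0) : N i j₀ = -1 := row_apply_eq_neg_one hA01 hN hcol (hsign i hi).2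
  obtain ⟨i₁, i₂, h₁, h₂, hne⟩ := N.exists_rows_ne_of_two_le_rank hrank
  have hdiff := sub_eq_C_of_apply_eq (i₁ := i₁) (i₂ := i₂) hf hcol
    (by rw [hrow i₁ h₁, hrow i₂ h₂])
  have hmem : f i₁ - f i₂ ∈ Ideal.span (Set.range f) :=
    sub_mem (Ideal.subset_span ⟨i₁, rfl⟩) (Ideal.subset_span ⟨i₂, rfl⟩)
  rw [hdiff] at hmem
  exact Ideal.eq_top_of_isUnit_mem _ hmem
    ((isUnit_iff_ne_zero.mpr (sum_ratCast_mul_kappa_ne_zero (sub_ne_zero.mpr hne))).map _)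

theorem stmt8 (s m : ℕ) (A B : Matrix (Fin s) (Fin m) ℕ)
    (hA01 : ∀ i j, A i j = 0 ∨ A i j = 1) (hB01 : ∀ i j, B i j = 0 ∨ B i j = 1)
    (N : Matrix (Fin s) (Fin m) ℚ)
    (hN : ∀ i j, N i j = (B i j : ℚ) - (A i j : ℚ))
    (hcolN : ∀ j, (fun i => N i j) ≠ 0)
    (hrank : 2 ≤ N.rank)
    (hsign : ∀ i, (N i ≠ 0) → (∃ j, 0 < N i j) ∧ (∃ j, N i j < 0))
    (hzerocols : (Finset.univ.filter (fun j : Fin m => ∀ k, A k j = 0)).card = m - 1)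
    (f : Fin s → MvPolynomial (Fin s) (Kf m))
    (hf : ∀ i, f i = ∑ j, MvPolynomial.C ((N i j : Kf m) * kappa m j) *
        ∏ k, (MvPolynomial.X k) ^ A k j) :
    Ideal.span (Set.range f) = ⊤ :=
  stmt8_general s m A B hA01 N hN hrank hsign hzerocols f hf
end

section
/- Let G be a zero-one network with reactant matrix A ∈ {0,1}^{s×m} and stoichiometric matrix N = B − A of full rank s, with s ≥ 3, where every row of N changes sign. Suppose exactly m−2 columns of A are zero. Then the steady-state ideal ⟨f₁,…,f_s⟩ in ℚ(κ)[x] equals ⟨1⟩. -/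
theorem stmt9 (s m : ℕ) (A B : Matrix (Fin s) (Fin m) ℕ)
    (hA01 : ∀ i j, A i j = 0 ∨ A i j = 1) (hB01 : ∀ i j, B i j = 0 ∨ B i j = 1)
    (N : Matrix (Fin s) (Fin m) ℚ)
    (hN : ∀ i j, N i j = (B i j : ℚ) - (A i j : ℚ))
    (hcolN : ∀ j, (fun i => N i j) ≠ 0)
    (hrank : N.rank = s)
    (hsign : ∀ i, (∃ j, 0 < N i j) ∧ (∃ j, N i j < 0))
    (hs : 3 ≤ s)
    (hzerocols : (Finset.univ.filter (fun j : Fin m => ∀ k, A k j = 0)).card = m - 2)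
    (f : Fin s → MvPolynomial (Fin s) (Kf m))
    (hf : ∀ i, f i = ∑ j, MvPolynomial.C ((N i j : Kf m) * kappa m j) *
        ∏ k, (MvPolynomial.X k) ^ A k j) :
    Ideal.span (Set.range f) = ⊤ := by
  classical
  set Z : Finset (Fin m) := Finset.univ.filter (fun j : Fin m => ∀ k, A k j = 0) with hZdef
  -- the complement of the zero columns has at most 2 elements
  have hZc : (Zᶜ).card ≤ 2 := by
    have h1 : Z.card + Zᶜ.card = m := by
      simpa using Finset.card_add_card_compl Z
    omega
  -- N.mulVecLin is surjective since rank N = s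
  have hsurj : Function.Surjective N.mulVecLin := by
    rw [← LinearMap.range_eq_top]
    apply Submodule.eq_top_of_finrank_eq
    rw [← Matrix.rank, hrank, Module.finrank_pi, Fintype.card_fin]
  -- the linear map sending a to (∑ i, a i * N i j) for j outside Z
  let T : (Fin s → ℚ) →ₗ[ℚ] ((Zᶜ : Finset (Fin m)) → ℚ) :=
    { toFun := fun a j => ∑ i, a i * N i (j : Fin m)
      map_add' := by
        intro a b; funext j; simp [add_mul, Finset.sum_add_distrib]
      map_smul' := by
        intro r a; funext j; simp [Finset.mul_sum, mul_assoc] }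
  have hTnotinj : ¬ Function.Injective T := by
    intro h
    have h2 := LinearMap.finrank_le_finrank_of_injective h
    rw [Module.finrank_pi, Module.finrank_pi, Fintype.card_fin, Fintype.card_coe] at h2
    omega
  obtain ⟨a, b, hab, hne⟩ := Function.not_injective_iff.mp hTnotinj
  set u : Fin s → ℚ := a - b with hu
  have hu0 : u ≠ 0 := sub_ne_zero.mpr hne
  have hTu : T u = 0 := by rw [map_sub, hab, sub_self]
  set w : Fin m → ℚ := fun j => ∑ i, u i * N i j with hw
  have hwZc : ∀ j ∉ Z, w j = 0 := by
    intro j hj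
    have := congrFun hTu ⟨j, Finset.mem_compl.mpr hj⟩
    simpa [T, hw] using this
  -- w ≠ 0 since the rows of N are independent
  have hwne : w ≠ 0 := by
    intro h0
    apply hu0
    funext i
    obtain ⟨x, hx⟩ := hsurj (Pi.single i 1)
    have hdot : ∑ j, w j * x j = u i := by
      have h1 : ∑ j, w j * x j = ∑ i', u i' * (N.mulVecLin x) i' := by
        simp only [hw, Matrix.mulVecLin_apply, Matrix.mulVec, dotProduct,
          Finset.sum_mul, Finset.mul_sum]
        rw [Finset.sum_comm]
        refine Finset.sum_congr rfl fun i' _ => Finset.sum_congr rfl fun j _ => by ring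
      rw [h1, hx]
      simp [Pi.single_apply, mul_ite, Finset.sum_ite_eq']
    have hui : u i = 0 := by
      rw [← hdot, h0]
      simp
    simpa using hui
  -- the key element of the ideal
  have hg : (∑ i, (MvPolynomial.C ((u i : Kf m)) : MvPolynomial (Fin s) (Kf m)) * f i)
      = MvPolynomial.C (∑ j, ((w j : Kf m)) * kappa m j) := by
    simp only [hf, Finset.mul_sum]
    rw [Finset.sum_comm, map_sum]
    refine Finset.sum_congr rfl fun j _ => ?_
    have step1 : ∑ i, (MvPolynomial.C ((u i : Kf m)) : MvPolynomial (Fin s) (Kf m)) *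
        (MvPolynomial.C ((N i j : Kf m) * kappa m j) * ∏ k, (MvPolynomial.X k) ^ A k j)
        = MvPolynomial.C (((w j : Kf m)) * kappa m j) * ∏ k, (MvPolynomial.X k) ^ A k j := by
      have : ∀ i, (MvPolynomial.C ((u i : Kf m)) : MvPolynomial (Fin s) (Kf m)) *
          (MvPolynomial.C ((N i j : Kf m) * kappa m j) * ∏ k, (MvPolynomial.X k) ^ A k j)
          = MvPolynomial.C (((u i : Kf m) * (N i j : Kf m)) * kappa m j) *
            ∏ k, (MvPolynomial.X k) ^ A k j := by
        intro i; rw [← mul_assoc, ← map_mul]; ring_nf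
      rw [Finset.sum_congr rfl fun i _ => this i, ← Finset.sum_mul, ← map_sum]
      congr 2
      rw [← Finset.sum_mul]
      congr 1
      rw [hw]
      push_cast
      rfl
    rw [step1]
    by_cases hj : j ∈ Z
    · have hAz : ∀ k, A k j = 0 := by
        have := Finset.mem_filter.mp hj
        exact this.2
      simp [hAz]
    · have : w j = 0 := hwZc j hj
      simp [this]
  set c : Kf m := ∑ j, ((w j : Kf m)) * kappa m j with hc
  -- c is nonzero
  have hCq : ∀ q : ℚ, (algebraMap (MvPolynomial (Fin m) ℚ) (Kf m)) (MvPolynomial.C q)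
      = (q : Kf m) := by
    intro q
    exact eq_ratCast ((algebraMap (MvPolynomial (Fin m) ℚ) (Kf m)).comp
      (MvPolynomial.C : ℚ →+* MvPolynomial (Fin m) ℚ)) q
  have hcalg : c = algebraMap (MvPolynomial (Fin m) ℚ) (Kf m)
      (∑ j, MvPolynomial.C (w j) * MvPolynomial.X j) := by
    rw [map_sum]
    refine Finset.sum_congr rfl fun j _ => ?_
    rw [map_mul, hCq, kappa]
  have hpne : (∑ j, MvPolynomial.C (w j) * MvPolynomial.X j : MvPolynomial (Fin m) ℚ) ≠ 0 := by
    obtain ⟨j0, hj0⟩ : ∃ j0, w j0 ≠ 0 := by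
      by_contra h
      push_neg at h
      exact hwne (funext h)
    intro h0
    have := congrArg (MvPolynomial.coeff (Finsupp.single j0 1)) h0
    simp only [MvPolynomial.coeff_sum, MvPolynomial.coeff_C_mul, MvPolynomial.coeff_X',
      MvPolynomial.coeff_zero, mul_ite, mul_one, mul_zero] at this
    have hiff : ∀ x : Fin m, (Finsupp.single x 1 = Finsupp.single j0 (1 : ℕ)) ↔ x = j0 :=
      fun x => Finsupp.single_left_inj one_ne_zero
    simp only [hiff, Finset.sum_ite_eq', Finset.mem_univ, if_true] at this
    exact hj0 this
  have hcne : c ≠ 0 := by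
    rw [hcalg]
    intro h
    exact hpne (IsFractionRing.injective (MvPolynomial (Fin m) ℚ) (Kf m) (by simpa using h))
  -- conclude
  have hmem : (MvPolynomial.C c : MvPolynomial (Fin s) (Kf m)) ∈ Ideal.span (Set.range f) := by
    rw [← hg]
    exact Ideal.sum_mem _ fun i _ => Ideal.mul_mem_left _ _ (Ideal.subset_span ⟨i, rfl⟩)
  exact Ideal.eq_top_of_isUnit_mem _ hmem
    ((isUnit_iff_ne_zero.mpr hcne).map MvPolynomial.C)
end

section
/- Let f₁ = κ₁x₂x₃ − κ₂x₁x₃ − κ₅x₁x₂, f₂ = −κ₁x₂x₃ + κ₂x₁x₃ + κ₃x₁x₃ − κ₄x₁x₂, f₃ = −κ₃x₁x₃ + κ₅x₁x₂ + κ₆x₁x₂ in ℚ(κ₁,…,κ₆)[x₁,x₂,x₃]. Then the system f₁ = f₂ = f₃ = 0 has no solution with x₁, x₂, x₃ all strictly positive real (for κᵢ replaced by any algebraically independent / generic positive reals satisfying κ₄ ≠ κ₆); more precisely, over ℚ(κ), the ideal ⟨f₁,f₂,f₃⟩ contains the monomials x₂x₃, x₁x₃, and x₁x₂. -/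
lemma kappa_ne_zero (j : Fin 6) : kappa 6 j ≠ 0 := by
  have inj := IsFractionRing.injective (MvPolynomial (Fin 6) ℚ) (Kf 6)
  simpa [kappa, map_eq_zero_iff _ inj] using (MvPolynomial.X_ne_zero (R := ℚ) j)

lemma kappa_sub_ne_zero : kappa 6 5 - kappa 6 3 ≠ 0 := by
  have inj := IsFractionRing.injective (MvPolynomial (Fin 6) ℚ) (Kf 6)
  intro h
  have h5 : kappa 6 5 = kappa 6 3 := sub_eq_zero.mp h
  have : (MvPolynomial.X (5 : Fin 6) : MvPolynomial (Fin 6) ℚ) = MvPolynomial.X 3 :=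
    inj h5
  have := MvPolynomial.X_injective this
  simp at this

set_option maxHeartbeats 1000000 in
open MvPolynomial in
theorem stmt17 :
    -- the steady-state ideal over ℚ(κ) contains the three quadratic monomials
    (X 1 * X 2 ∈ Ideal.span
        ({ C (kappa 6 0) * X 1 * X 2 - C (kappa 6 1) * X 0 * X 2
              - C (kappa 6 4) * X 0 * X 1,
           -C (kappa 6 0) * X 1 * X 2 + C (kappa 6 1) * X 0 * X 2
              + C (kappa 6 2) * X 0 * X 2 - C (kappa 6 3) * X 0 * X 1,
           -C (kappa 6 2) * X 0 * X 2 + C (kappa 6 4) * X 0 * X 1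
              + C (kappa 6 5) * X 0 * X 1 } : Set (MvPolynomial (Fin 3) (Kf 6))) ∧
      X 0 * X 2 ∈ Ideal.span
        ({ C (kappa 6 0) * X 1 * X 2 - C (kappa 6 1) * X 0 * X 2
              - C (kappa 6 4) * X 0 * X 1,
           -C (kappa 6 0) * X 1 * X 2 + C (kappa 6 1) * X 0 * X 2
              + C (kappa 6 2) * X 0 * X 2 - C (kappa 6 3) * X 0 * X 1,
           -C (kappa 6 2) * X 0 * X 2 + C (kappa 6 4) * X 0 * X 1
              + C (kappa 6 5) * X 0 * X 1 } : Set (MvPolynomial (Fin 3) (Kf 6))) ∧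
      X 0 * X 1 ∈ Ideal.span
        ({ C (kappa 6 0) * X 1 * X 2 - C (kappa 6 1) * X 0 * X 2
              - C (kappa 6 4) * X 0 * X 1,
           -C (kappa 6 0) * X 1 * X 2 + C (kappa 6 1) * X 0 * X 2
              + C (kappa 6 2) * X 0 * X 2 - C (kappa 6 3) * X 0 * X 1,
           -C (kappa 6 2) * X 0 * X 2 + C (kappa 6 4) * X 0 * X 1
              + C (kappa 6 5) * X 0 * X 1 } : Set (MvPolynomial (Fin 3) (Kf 6)))) ∧
    -- and for any positive real rate constants with κ₄ ≠ κ₆ there is no positive solution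
    ∀ κ : Fin 6 → ℝ, (∀ j, 0 < κ j) → κ 3 ≠ κ 5 →
      ¬ ∃ x : Fin 3 → ℝ, (∀ i, 0 < x i) ∧
        κ 0 * x 1 * x 2 - κ 1 * x 0 * x 2 - κ 4 * x 0 * x 1 = 0 ∧
        -(κ 0 * x 1 * x 2) + κ 1 * x 0 * x 2 + κ 2 * x 0 * x 2 - κ 3 * x 0 * x 1 = 0 ∧
        -(κ 2 * x 0 * x 2) + κ 4 * x 0 * x 1 + κ 5 * x 0 * x 1 = 0 := by
  set f1 : MvPolynomial (Fin 3) (Kf 6) :=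
    C (kappa 6 0) * X 1 * X 2 - C (kappa 6 1) * X 0 * X 2 - C (kappa 6 4) * X 0 * X 1 with hf1
  set f2 : MvPolynomial (Fin 3) (Kf 6) :=
    -C (kappa 6 0) * X 1 * X 2 + C (kappa 6 1) * X 0 * X 2
      + C (kappa 6 2) * X 0 * X 2 - C (kappa 6 3) * X 0 * X 1 with hf2
  set f3 : MvPolynomial (Fin 3) (Kf 6) :=
    -C (kappa 6 2) * X 0 * X 2 + C (kappa 6 4) * X 0 * X 1 + C (kappa 6 5) * X 0 * X 1 with hf3
  set I : Ideal (MvPolynomial (Fin 3) (Kf 6)) := Ideal.span {f1, f2, f3} with hI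
  have h1 : f1 ∈ I := Ideal.subset_span (by simp)
  have h2 : f2 ∈ I := Ideal.subset_span (by simp)
  have h3 : f3 ∈ I := Ideal.subset_span (by simp)
  have hu := kappa_sub_ne_zero
  -- X 0 * X 1 ∈ I
  have h01 : (X 0 * X 1 : MvPolynomial (Fin 3) (Kf 6)) ∈ I := by
    have hsum : f1 + f2 + f3 ∈ I := I.add_mem (I.add_mem h1 h2) h3
    have h := I.mul_mem_left (C (kappa 6 5 - kappa 6 3)⁻¹) hsum
    have key : f1 + f2 + f3 = C (kappa 6 5 - kappa 6 3) * (X 0 * X 1) := by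
      rw [hf1, hf2, hf3, map_sub]; ring
    rwa [key, ← mul_assoc, ← C_mul, inv_mul_cancel₀ hu, C_1, one_mul] at h
  -- X 0 * X 2 ∈ I
  have h02 : (X 0 * X 2 : MvPolynomial (Fin 3) (Kf 6)) ∈ I := by
    have hmem : (C (kappa 6 4) + C (kappa 6 5)) * (X 0 * X 1) - f3 ∈ I :=
      I.sub_mem (I.mul_mem_left _ h01) h3
    have h := I.mul_mem_left (C (kappa 6 2)⁻¹) hmem
    have key : (C (kappa 6 4) + C (kappa 6 5)) * (X 0 * X 1) - f3
        = C (kappa 6 2) * (X 0 * X 2) := by rw [hf3]; ring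
    rwa [key, ← mul_assoc, ← C_mul, inv_mul_cancel₀ (kappa_ne_zero 2), C_1, one_mul] at h
  -- X 1 * X 2 ∈ I
  have h12 : (X 1 * X 2 : MvPolynomial (Fin 3) (Kf 6)) ∈ I := by
    have hmem : f1 + C (kappa 6 1) * (X 0 * X 2) + C (kappa 6 4) * (X 0 * X 1) ∈ I :=
      I.add_mem (I.add_mem h1 (I.mul_mem_left _ h02)) (I.mul_mem_left _ h01)
    have h := I.mul_mem_left (C (kappa 6 0)⁻¹) hmem
    have key : f1 + C (kappa 6 1) * (X 0 * X 2) + C (kappa 6 4) * (X 0 * X 1)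
        = C (kappa 6 0) * (X 1 * X 2) := by rw [hf1]; ring
    rwa [key, ← mul_assoc, ← C_mul, inv_mul_cancel₀ (kappa_ne_zero 0), C_1, one_mul] at h
  refine ⟨⟨h12, h02, h01⟩, ?_⟩
  rintro κ hκ hne ⟨x, hx, e1, e2, e3⟩
  have hx01 : 0 < x 0 * x 1 := mul_pos (hx 0) (hx 1)
  have : (κ 5 - κ 3) * (x 0 * x 1) = 0 := by linear_combination e1 + e2 + e3
  rcases mul_eq_zero.mp this with h | h
  · exact hne (sub_eq_zero.mp h).symm
  · exact absurd h (ne_of_gt hx01)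
end
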